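/- The map f from trees on ω to binary trees given by the encoding (n₁,...,n_k) ↦ r^{n₁} l ⋯ r^{n_k} l is continuous: the label of any binary-tree node at depth n in f(T) is determined by the membership in T of finitely many sequences (those in {0,...,n}^{≤ n}). -/

import Mathlib

open Classical

/-- Infinite binary trees over {a,b}; `true` = a, `false` = b. -/
abbrev Tree2 := List (Fin 2) → Bool

/-- The length-`n` prefix of a branch. -/
def pre (β : ℕ → Fin 2) (n : ℕ) : List (Fin 2) := List.ofFn (fun i : Fin n => β i)

/-- A branch is good: all its finite prefixes are labelled `a` and it turns left (0)
infinitely often. -/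
def Good (t : Tree2) (β : ℕ → Fin 2) : Prop :=
  (∀ n, t (pre β n) = true) ∧ (∀ m, ∃ n ≥ m, β n = 0)

/-- `β` is strictly to the left of `γ`. -/
def LeftOf (β γ : ℕ → Fin 2) : Prop :=
  ∃ n, (∀ i < n, β i = γ i) ∧ β n = 0 ∧ γ n = 1

/-- A branch passes through a node. -/
def Through (γ : ℕ → Fin 2) (v : List (Fin 2)) : Prop := pre γ v.length = v

/-- The encoding (n₁,…,n_k) ↦ r^{n₁} l r^{n₂} l ⋯ r^{n_k} l, with r = 1 and l = 0. -/
def enc : List ℕ → List (Fin 2)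
  | [] => []
  | n :: u => List.replicate n (1 : Fin 2) ++ (0 : Fin 2) :: enc u

/-- The reduction: a node of `fT T` is labelled `a` iff it is a prefix of some word
`enc u ++ r^m` with `u ∈ T`. -/
noncomputable def fT (T : List ℕ → Bool) : Tree2 := fun v =>
  if ∃ u m, T u = true ∧ v <+: (enc u ++ List.replicate m (1 : Fin 2)) then true else false

/-- The space of trees on ω: prefix-closed subsets of `List ℕ` (as characteristic
functions), topologized as a subspace of `2 ^ (List ℕ)`. -/
abbrev TrN := {T : List ℕ → Bool // ∀ u v : List ℕ, u <+: v → T v = true → T u = true}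

/-- Ill-founded trees: those with an infinite branch. -/
def IF : Set TrN :=
  {T | ∃ x : ℕ → ℕ, ∀ k : ℕ, T.1 (List.ofFn fun i : Fin k => x i) = true}

/-!
Every prefix `v` of a word `enc u ++ r^m` has the form `enc u' ++ r^j` with `u'` a prefix of `u`;
such a `u'` has length and entries at most `|v|`, and lies in `T` whenever `u` does if `T` is
prefix-closed. For such `T` the label of `v` in `fT T` is therefore decided by the finitely many
sequences in `{0,…,|v|}^{≤|v|}`, so each coordinate of `fT` is locally constant.
-/

theorem DependsOn.continuous {ι Y : Type*} {X : ι → Type*} [∀ i, TopologicalSpace (X i)]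
    [∀ i, DiscreteTopology (X i)] [TopologicalSpace Y] {f : (Π i, X i) → Y} {s : Set ι}
    (hs : s.Finite) (hf : DependsOn f s) : Continuous f := by
  refine IsLocallyConstant.continuous ((IsLocallyConstant.iff_eventually_eq f).2 fun x => ?_)
  have hnear : ∀ᶠ y in nhds x, ∀ i ∈ s, y i = x i :=
    (Filter.eventually_all_finite hs).2 fun i _ =>
      (continuous_apply i).continuousAt.eventually_mem ((isOpen_discrete {x i}).mem_nhds rfl)
  exact hnear.mono fun y hy => hf hy

theorem List.prefix_or_exists_eq_append_of_prefix_append {α : Type*} {v x y : List α}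
    (h : v <+: x ++ y) : v <+: x ∨ ∃ w, v = x ++ w ∧ w <+: y := by
  rcases le_or_gt v.length x.length with hl | hl
  · exact Or.inl (List.prefix_of_prefix_length_le h (x.prefix_append y) hl)
  · obtain ⟨w, rfl⟩ := List.prefix_of_prefix_length_le (x.prefix_append y) h hl.le
    exact Or.inr ⟨w, rfl, (List.prefix_append_right_inj x).mp h⟩

theorem exists_eq_enc_append_of_prefix {u : List ℕ} {m : ℕ} {v : List (Fin 2)}
    (h : v <+: enc u ++ List.replicate m 1) :
    ∃ u', u' <+: u ∧ ∃ j, v = enc u' ++ List.replicate j 1 := by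
  induction u generalizing v with
  | nil =>
    exact ⟨[], List.nil_prefix, v.length, by simpa [enc] using (List.prefix_replicate_iff.1 h).2⟩
  | cons a u ih =>
    have h' : v <+: List.replicate a 1 ++ 0 :: (enc u ++ List.replicate m 1) := by
      simpa [enc] using h
    rcases List.prefix_or_exists_eq_append_of_prefix_append h' with hv | ⟨w, rfl, hw⟩
    · exact ⟨[], List.nil_prefix, v.length, by simpa [enc] using (List.prefix_replicate_iff.1 hv).2⟩
    rcases List.prefix_cons_iff.1 hw with rfl | ⟨t, rfl, ht⟩
    · exact ⟨[], List.nil_prefix, a, by simp [enc]⟩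
    obtain ⟨u', hu', j, rfl⟩ := ih ht
    exact ⟨a :: u', List.cons_prefix_cons.2 ⟨rfl, hu'⟩, j, by simp [enc]⟩

def boundedSeqs (n : ℕ) : Set (List ℕ) := {u | u.length ≤ n ∧ ∀ i ∈ u, i ≤ n}

theorem boundedSeqs_mono : Monotone boundedSeqs :=
  fun _ _ hnm _ ⟨hlen, hle⟩ => ⟨hlen.trans hnm, fun i hi => (hle i hi).trans hnm⟩

theorem boundedSeqs_finite (n : ℕ) : (boundedSeqs n).Finite := by
  refine ((List.finite_length_le (Fin (n + 1)) n).image (List.map Fin.val)).subset ?_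
  rintro u ⟨hlen, hle⟩
  refine ⟨u.map (Fin.ofNat (n + 1)), by simpa using hlen, ?_⟩
  rw [List.map_map]
  exact (List.map_congr_left fun i hi => Nat.mod_eq_of_lt (Nat.lt_succ_of_le (hle i hi))).trans
    u.map_id

theorem mem_boundedSeqs_length_enc (u : List ℕ) : u ∈ boundedSeqs (enc u).length := by
  induction u with
  | nil => simp [boundedSeqs]
  | cons a u ih =>
    obtain ⟨hlen, hle⟩ := ih
    have hlen_enc : (enc (a :: u)).length = a + (enc u).length + 1 := by simp [enc]; omega
    rw [hlen_enc]
    refine ⟨by simp only [List.length_cons]; omega, fun i hi => ?_⟩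
    rcases List.mem_cons.1 hi with rfl | hi
    · omega
    · have := hle i hi
      omega

noncomputable def boundedLabel (v : List (Fin 2)) (T : List ℕ → Bool) : Bool :=
  decide (∃ u ∈ boundedSeqs v.length, T u = true ∧ v <+: enc u ++ List.replicate v.length 1)

theorem dependsOn_boundedLabel (v : List (Fin 2)) :
    DependsOn (boundedLabel v) (boundedSeqs v.length) := by
  intro T T' h
  unfold boundedLabel
  congr 1
  exact propext <| exists_congr fun u => and_congr_right fun hu => by rw [h u hu]

theorem fT_eq_boundedLabel {T : List ℕ → Bool}
    (hT : ∀ u v : List ℕ, u <+: v → T v = true → T u = true) (v : List (Fin 2)) :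
    fT T v = boundedLabel v T := by
  have key : (∃ u m, T u = true ∧ v <+: enc u ++ List.replicate m 1) ↔
      ∃ u ∈ boundedSeqs v.length, T u = true ∧ v <+: enc u ++ List.replicate v.length 1 := by
    refine ⟨fun ⟨u, _, hu, hv⟩ => ?_, fun ⟨u, _, hu, hv⟩ => ⟨u, _, hu, hv⟩⟩
    obtain ⟨u', hu', j, rfl⟩ := exists_eq_enc_append_of_prefix hv
    refine ⟨u', boundedSeqs_mono (by simp) (mem_boundedSeqs_length_enc u'), hT _ _ hu' hu, ?_⟩
    exact (List.prefix_append_right_inj _).2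
      (List.prefix_replicate_iff.2 ⟨by simp, by simp⟩)
  simp only [fT, boundedLabel, key, Bool.if_false_right, Bool.and_true]

/-- The encoding map is continuous on the space of prefix-closed trees on ω. -/
theorem fT_continuous : Continuous (fun T : TrN => fT T.1) := by
  refine continuous_pi fun v => ?_
  have hfactor : (fun T : TrN => fT T.1 v) = boundedLabel v ∘ Subtype.val :=
    funext fun T => fT_eq_boundedLabel T.2 v
  rw [hfactor]
  exact ((dependsOn_boundedLabel v).continuous (boundedSeqs_finite _)).comp continuous_subtype_val
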